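/- arXiv:2605.15438 — 3 statements merged into one kernel-verified Lean document; each statement's English description precedes it below -/
import Mathlib

section
/- Let n1, n2, m, p, r be positive integers. Let E11, A11 be real n1×n1 matrices, A21 a real n2×n1 matrix, B1 a real n1×m matrix, and C a real p×n1 matrix. Let σ_1, …, σ_r be complex numbers and b_1, …, b_r complex vectors in ℂ^m, and suppose for each i = 1, …, r the block (saddle-point) matrix K(σ_i) = [[σ_i E11 − A11, A21ᵀ], [A21, 0]] is invertible, and let (φ_i, z_i) ∈ ℂ^{n1} × ℂ^{n2} be the unique solution of K(σ_i)(φ_i; z_i) = (B1 b_i; 0). Set Φ = [φ_1, …, φ_r] ∈ ℂ^{n1×r} and define the reduced matrices Ẽ = Φᵀ E11 Φ, Ã = Φᵀ A11 Φ, B̃ = Φᵀ B1, C̃ = C Φ. Then for each i with σ_i Ẽ − Ã invertible, the reduced transfer function interpolates the full transfer function tangentially at σ_i in direction b_i: C̃ (σ_i Ẽ − Ã)^{-1} B̃ b_i = C φ_i, where C φ_i is exactly the value G(σ_i) b_i of the full differential-algebraic system's transfer function (the output map C applied to the velocity component of the solution of the shifted saddle-point system with right-hand side (B1 b_i; 0)).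 -/
/-! The second block row of each saddle-point solve says `A21 φⱼ = 0`, i.e. `A21 Φ = 0`, so the
Galerkin projection `Φᵀ` annihilates the term `A21ᵀ zᵢ` of the first block row. Hence the unit
vector `eᵢ` solves the reduced system `Φᵀ (σᵢ E11 − A11) Φ eᵢ = Φᵀ B1 bᵢ`, and the reduced output
is `C Φ eᵢ = C φᵢ`. -/

open Matrix

namespace Matrix

variable {R : Type*} [CommRing R] {n k r m p : Type*} [Fintype n] [Fintype k]

theorem fromBlocks_transpose_zero_mulVec_eq_iff (M : Matrix n n R) (N : Matrix k n R)
    (x : n → R) (y : k → R) (f : n → R) :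
    fromBlocks M Nᵀ N 0 *ᵥ Sum.elim x y = Sum.elim f 0 ↔ M *ᵥ x + Nᵀ *ᵥ y = f ∧ N *ᵥ x = 0 := by
  simp [fromBlocks_mulVec, Sum.elim_eq_iff]

variable [Fintype r] [Fintype m] [DecidableEq r]
  {M : Matrix n n R} {N : Matrix k n R} {Φ : Matrix n r R}
  {B : Matrix n m R} {w : m → R} {y : k → R} {i : r}

theorem galerkin_mulVec_single_eq (hNΦ : N * Φ = 0) (h : M *ᵥ Φ.col i + Nᵀ *ᵥ y = B *ᵥ w) :
    (Φᵀ * M * Φ) *ᵥ Pi.single i 1 = (Φᵀ * B) *ᵥ w := by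
  have hΦN : Φᵀ * Nᵀ = 0 := by rw [← transpose_mul, hNΦ, transpose_zero]
  rw [← mulVec_mulVec, mulVec_single_one, ← mulVec_mulVec, eq_sub_of_add_eq h, mulVec_sub,
    mulVec_mulVec y, hΦN, zero_mulVec, sub_zero, mulVec_mulVec]

theorem galerkin_interpolation (C : Matrix p n R) (hNΦ : N * Φ = 0)
    (h : M *ᵥ Φ.col i + Nᵀ *ᵥ y = B *ᵥ w) (hunit : IsUnit (Φᵀ * M * Φ)) :
    (C * Φ * (Φᵀ * M * Φ)⁻¹ * (Φᵀ * B)) *ᵥ w = C *ᵥ Φ.col i := by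
  have := hunit.invertible
  rw [← mulVec_mulVec, ← mulVec_mulVec, inv_mulVec_eq_vec (galerkin_mulVec_single_eq hNΦ h).symm,
    ← mulVec_mulVec, mulVec_single_one]

end Matrix

theorem imor_dae_tangential_interpolation_general
    (n1 n2 m p r : ℕ)
    (E11 A11 : Matrix (Fin n1) (Fin n1) ℝ)
    (A21 : Matrix (Fin n2) (Fin n1) ℝ)
    (B1 : Matrix (Fin n1) (Fin m) ℝ)
    (C : Matrix (Fin p) (Fin n1) ℝ)
    (σ : Fin r → ℂ) (b : Fin r → Fin m → ℂ)
    (φ : Fin r → Fin n1 → ℂ) (z : Fin r → Fin n2 → ℂ)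
    -- the shifted saddle-point (block) matrix K(σᵢ)
    (K : Fin r → Matrix (Fin n1 ⊕ Fin n2) (Fin n1 ⊕ Fin n2) ℂ)
    (hK : ∀ i, K i =
      Matrix.fromBlocks
        (σ i • E11.map Complex.ofReal - A11.map Complex.ofReal)
        (A21.map Complex.ofReal)ᵀ
        (A21.map Complex.ofReal) 0)
    (hsolve : ∀ i,
      (K i) *ᵥ (Sum.elim (φ i) (z i)) = Sum.elim ((B1.map Complex.ofReal) *ᵥ b i) 0)
    -- Φ = [φ₁, …, φ_r] and the reduced matrices Ẽ, Ã, B̃, C̃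
    (Φ : Matrix (Fin n1) (Fin r) ℂ) (hΦ : Φ = Matrix.of fun j i => φ i j)
    (Er Ar : Matrix (Fin r) (Fin r) ℂ)
    (Br : Matrix (Fin r) (Fin m) ℂ) (Cr : Matrix (Fin p) (Fin r) ℂ)
    (hEr : Er = Φᵀ * (E11.map Complex.ofReal) * Φ)
    (hAr : Ar = Φᵀ * (A11.map Complex.ofReal) * Φ)
    (hBr : Br = Φᵀ * (B1.map Complex.ofReal))
    (hCr : Cr = (C.map Complex.ofReal) * Φ) :
    ∀ i : Fin r, IsUnit (σ i • Er - Ar) →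
      (Cr * (σ i • Er - Ar)⁻¹ * Br) *ᵥ b i = (C.map Complex.ofReal) *ᵥ φ i := by
  intro i hunit
  have hcol : ∀ j, φ j = Φ.col j := fun j => by rw [hΦ]; rfl
  simp only [hcol] at hsolve ⊢
  have hblocks := fun j => (fromBlocks_transpose_zero_mulVec_eq_iff _ _ _ _ _).mp
    (hK j ▸ hsolve j)
  have hdivfree : A21.map Complex.ofReal * Φ = 0 := ext_col fun j => (hblocks j).2
  have hreduced : σ i • Er - Ar =
      Φᵀ * (σ i • E11.map Complex.ofReal - A11.map Complex.ofReal) * Φ := by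
    rw [hEr, hAr, Matrix.mul_sub, Matrix.sub_mul, Matrix.mul_smul, Matrix.smul_mul]
  rw [hreduced] at hunit
  rw [hCr, hBr, hreduced]
  exact galerkin_interpolation _ hdivfree (hblocks i).1 hunit

/-- Tangential interpolation for interpolatory model order reduction of an index-2
differential-algebraic (Stokes-like) system.  The basis vectors `φ i` are obtained from
shifted saddle-point solves with right-hand side `(B1 b i; 0)`; the Galerkin-projected
reduced transfer function then interpolates the full transfer function tangentially:
`C̃ (σᵢ Ẽ − Ã)⁻¹ B̃ bᵢ = C φᵢ = G(σᵢ) bᵢ`. -/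
theorem imor_dae_tangential_interpolation
    (n1 n2 m p r : ℕ) (hn1 : 0 < n1) (hn2 : 0 < n2) (hm : 0 < m) (hp : 0 < p) (hr : 0 < r)
    (E11 A11 : Matrix (Fin n1) (Fin n1) ℝ)
    (A21 : Matrix (Fin n2) (Fin n1) ℝ)
    (B1 : Matrix (Fin n1) (Fin m) ℝ)
    (C : Matrix (Fin p) (Fin n1) ℝ)
    (σ : Fin r → ℂ) (b : Fin r → Fin m → ℂ)
    (φ : Fin r → Fin n1 → ℂ) (z : Fin r → Fin n2 → ℂ)
    -- the shifted saddle-point (block) matrix K(σᵢ)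
    (K : Fin r → Matrix (Fin n1 ⊕ Fin n2) (Fin n1 ⊕ Fin n2) ℂ)
    (hK : ∀ i, K i =
      Matrix.fromBlocks
        (σ i • E11.map Complex.ofReal - A11.map Complex.ofReal)
        (A21.map Complex.ofReal)ᵀ
        (A21.map Complex.ofReal) 0)
    -- K(σᵢ) is invertible and (φᵢ, zᵢ) solves K(σᵢ)(φᵢ; zᵢ) = (B1 bᵢ; 0)
    (hKinv : ∀ i, IsUnit (K i))
    (hsolve : ∀ i,
      (K i) *ᵥ (Sum.elim (φ i) (z i)) = Sum.elim ((B1.map Complex.ofReal) *ᵥ b i) 0)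
    -- Φ = [φ₁, …, φ_r] and the reduced matrices Ẽ, Ã, B̃, C̃
    (Φ : Matrix (Fin n1) (Fin r) ℂ) (hΦ : Φ = Matrix.of fun j i => φ i j)
    (Er Ar : Matrix (Fin r) (Fin r) ℂ)
    (Br : Matrix (Fin r) (Fin m) ℂ) (Cr : Matrix (Fin p) (Fin r) ℂ)
    (hEr : Er = Φᵀ * (E11.map Complex.ofReal) * Φ)
    (hAr : Ar = Φᵀ * (A11.map Complex.ofReal) * Φ)
    (hBr : Br = Φᵀ * (B1.map Complex.ofReal))
    (hCr : Cr = (C.map Complex.ofReal) * Φ) :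
    ∀ i : Fin r, IsUnit (σ i • Er - Ar) →
      (Cr * (σ i • Er - Ar)⁻¹ * Br) *ᵥ b i = (C.map Complex.ofReal) *ᵥ φ i :=
  imor_dae_tangential_interpolation_general n1 n2 m p r E11 A11 A21 B1 C σ b φ z K hK hsolve Φ hΦ Er
    Ar Br Cr hEr hAr hBr hCr
end

section
/- Let n, m, p, r be positive integers, let E, A be complex n×n matrices, B a complex n×m matrix, C a complex p×n matrix, and Φ a complex n×r matrix. Fix σ ∈ ℂ and b ∈ ℂ^m. Suppose σE − A is invertible, σ ΦᵀEΦ − ΦᵀAΦ is invertible, and the vector (σE − A)^{-1} B b lies in the column space of Φ, i.e., (σE − A)^{-1} B b = Φ c for some c ∈ ℂ^r. Then the Galerkin-projected reduced transfer function matches the full transfer function tangentially at σ in direction b: (CΦ) (σ ΦᵀEΦ − ΦᵀAΦ)^{-1} (ΦᵀB) b = C (σE − A)^{-1} B b. -/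
/-!
Write `K = σE − A`. The hypothesis says that the full solution `x = K⁻¹ B b` equals `Φ c`.
Since `Φᵀ K Φ` is exactly the reduced matrix `σ ΦᵀEΦ − ΦᵀAΦ`, projecting `K x = B b` gives
`(σ ΦᵀEΦ − ΦᵀAΦ) c = Φᵀ B b`, so the reduced solve returns `c`, and lifting it back with `Φ`
recovers `x`; applying `C` to both gives the interpolation identity.
-/

open Matrix

namespace Matrix

theorem mul_smul_sub_mul {R : Type*} [CommRing R] {l n k : Type*} [Fintype n] [Fintype k]
    (W : Matrix l n R) (σ : R) (E A : Matrix n n R) (V : Matrix n k R) :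
    W * (σ • E - A) * V = σ • (W * E * V) - W * A * V := by
  rw [Matrix.mul_sub, Matrix.sub_mul, Matrix.mul_smul, Matrix.smul_mul]

theorem mulVec_eq_of_nonsing_inv_mulVec_eq {R : Type*} [CommRing R] {n : Type*} [Fintype n]
    [DecidableEq n] {K : Matrix n n R} (hK : IsUnit K) {y x : n → R}
    (h : K⁻¹ *ᵥ y = x) : y = K *ᵥ x := by
  rw [← h, mulVec_mulVec, mul_nonsing_inv K ((isUnit_iff_isUnit_det K).mp hK), one_mulVec]

theorem nonsing_inv_projected_mulVec_of_eq_mulVec {R : Type*} [CommRing R] {n r : Type*}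
    [Fintype n] [Fintype r] [DecidableEq r] (K : Matrix n n R) (W : Matrix r n R)
    (V : Matrix n r R) (hKr : IsUnit (W * K * V)) {y : n → R} {c : r → R}
    (hy : y = K *ᵥ (V *ᵥ c)) : (W * K * V)⁻¹ *ᵥ (W *ᵥ y) = c := by
  have := hKr.invertible
  exact inv_mulVec_eq_vec (by rw [hy, mulVec_mulVec, mulVec_mulVec])

end Matrix

theorem reduced_transfer_function_tangential_interpolation_general
    (n m p r : ℕ)
    (E A : Matrix (Fin n) (Fin n) ℂ) (B : Matrix (Fin n) (Fin m) ℂ)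
    (C : Matrix (Fin p) (Fin n) ℂ) (Φ : Matrix (Fin n) (Fin r) ℂ)
    (σ : ℂ) (b : Fin m → ℂ)
    (hfull : IsUnit (σ • E - A))
    (hred : IsUnit (σ • (Φᵀ * E * Φ) - Φᵀ * A * Φ))
    (hsubspace : ∃ c : Fin r → ℂ, (σ • E - A)⁻¹ *ᵥ (B *ᵥ b) = Φ *ᵥ c) :
    (C * Φ) *ᵥ ((σ • (Φᵀ * E * Φ) - Φᵀ * A * Φ)⁻¹ *ᵥ ((Φᵀ * B) *ᵥ b))
      = C *ᵥ ((σ • E - A)⁻¹ *ᵥ (B *ᵥ b)) := by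
  obtain ⟨c, hc⟩ := hsubspace
  rw [← mul_smul_sub_mul] at hred ⊢
  have hsolve : B *ᵥ b = (σ • E - A) *ᵥ (Φ *ᵥ c) := mulVec_eq_of_nonsing_inv_mulVec_eq hfull hc
  rw [← mulVec_mulVec, ← mulVec_mulVec,
    nonsing_inv_projected_mulVec_of_eq_mulVec _ _ _ hred hsolve, hc, mulVec_mulVec]

/-- Subspace-containment tangential interpolation lemma for Galerkin-projected
reduced-order models: if `(σE − A)⁻¹ B b` lies in the column space of `Φ` and both the
full and reduced shifted matrices are invertible, then the reduced transfer function
matches the full one tangentially at `σ` in direction `b`. -/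
theorem reduced_transfer_function_tangential_interpolation
    (n m p r : ℕ) (hn : 0 < n) (hm : 0 < m) (hp : 0 < p) (hr : 0 < r)
    (E A : Matrix (Fin n) (Fin n) ℂ) (B : Matrix (Fin n) (Fin m) ℂ)
    (C : Matrix (Fin p) (Fin n) ℂ) (Φ : Matrix (Fin n) (Fin r) ℂ)
    (σ : ℂ) (b : Fin m → ℂ)
    (hfull : IsUnit (σ • E - A))
    (hred : IsUnit (σ • (Φᵀ * E * Φ) - Φᵀ * A * Φ))
    (hsubspace : ∃ c : Fin r → ℂ, (σ • E - A)⁻¹ *ᵥ (B *ᵥ b) = Φ *ᵥ c) :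
    (C * Φ) *ᵥ ((σ • (Φᵀ * E * Φ) - Φᵀ * A * Φ)⁻¹ *ᵥ ((Φᵀ * B) *ᵥ b))
      = C *ᵥ ((σ • E - A)⁻¹ *ᵥ (B *ᵥ b)) :=
  reduced_transfer_function_tangential_interpolation_general n m p r E A B C Φ σ b hfull hred
    hsubspace
end

section
/- Let A be a real n×n matrix, B a real n×m matrix, N a real n×n² matrix defining the quadratic dynamics f(x) = N (x ⊗ x), Q a symmetric real n×n matrix, and R a symmetric positive definite real m×m matrix. Suppose V2 is a symmetric real n×n matrix solving the algebraic Riccati equation Aᵀ V2 + V2 A − V2 B R^{-1} Bᵀ V2 + Q = 0, define k1 = −R^{-1} Bᵀ V2, and let v2 = vec(V2) ∈ ℝ^{n²}. Suppose v3 ∈ ℝ^{n³} solves the Kronecker-sum linear system L_3((A + B k1)ᵀ) v3 = −(Nᵀ ⊗ I_n + I_n ⊗ Nᵀ) v2. Define the cubic value function approximation v(x) = v2ᵀ (x ⊗ x) + v3ᵀ (x ⊗ x ⊗ x). Then for every real m×n² matrix k2, the feedback law u(x) = k1 x + k2 (x ⊗ x) makes all monomial terms of degree at most 3 in the Hamilton–Jacobi–Bellman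 residual ρ(x) = ∇v(x)·(A x + B u(x) + N(x ⊗ x)) + xᵀ Q x + u(x)ᵀ R u(x) vanish; that is, ρ(x)/‖x‖³ → 0 as x → 0. -/
open Matrix Kronecker Filter Topology

/-- Kronecker product of two vectors in ℝⁿ: `(x ⊗ y)_{(i,j)} = x_i y_j`. -/
def kron2 {n : ℕ} (x y : Fin n → ℝ) : Fin n × Fin n → ℝ :=
  fun q => x q.1 * y q.2

/-- Threefold Kronecker product of a vector with itself. -/
def kron3 {n : ℕ} (x : Fin n → ℝ) : Fin n × Fin n × Fin n → ℝ :=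
  fun q => x q.1 * x q.2.1 * x q.2.2

/-- Column-major vectorization of a square matrix, so that
`vec(V)ᵀ (y ⊗ x) = xᵀ V y`. -/
def vecCM {n : ℕ} (V : Matrix (Fin n) (Fin n) ℝ) : Fin n × Fin n → ℝ :=
  fun q => V q.2 q.1

/-- The 3-fold Kronecker sum operator `L₃(X) = X⊗I⊗I + I⊗X⊗I + I⊗I⊗X`. -/
def L3 {n : ℕ} (X : Matrix (Fin n) (Fin n) ℝ) :
    Matrix (Fin n × Fin n × Fin n) (Fin n × Fin n × Fin n) ℝ :=
  X ⊗ₖ (1 : Matrix (Fin n × Fin n) (Fin n × Fin n) ℝ)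
    + (1 : Matrix (Fin n) (Fin n) ℝ) ⊗ₖ (X ⊗ₖ (1 : Matrix (Fin n) (Fin n) ℝ))
    + (1 : Matrix (Fin n) (Fin n) ℝ) ⊗ₖ ((1 : Matrix (Fin n) (Fin n) ℝ) ⊗ₖ X)

/-- The operator `Nᵀ ⊗ I_n + I_n ⊗ Nᵀ` (with indices reassociated) appearing on the
right-hand side of the cubic value-function equation. -/
def L2N {n : ℕ} (N : Matrix (Fin n) (Fin n × Fin n) ℝ) :
    Matrix (Fin n × Fin n × Fin n) (Fin n × Fin n) ℝ :=
  (Matrix.reindex (Equiv.prodAssoc (Fin n) (Fin n) (Fin n)) (Equiv.refl (Fin n × Fin n)))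
      (Nᵀ ⊗ₖ (1 : Matrix (Fin n) (Fin n) ℝ))
    + (1 : Matrix (Fin n) (Fin n) ℝ) ⊗ₖ Nᵀ

/- ### Auxiliary definitions and lemmas -/

/-- Kronecker product of vectors over general index types. -/
def QQRkv {α β : Type*} (x : α → ℝ) (y : β → ℝ) : α × β → ℝ := fun q => x q.1 * y q.2

/-- Trilinear form associated to a third-order coefficient vector. -/
def QQRtri3 {n : ℕ} (w : Fin n × Fin n × Fin n → ℝ) (a b c : Fin n → ℝ) : ℝ :=
  ∑ q : Fin n × Fin n × Fin n, w q * (a q.1 * b q.2.1 * c q.2.2)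

lemma QQRkv_mulVec {α β α' β' : Type*} [Fintype α] [Fintype β]
    (A : Matrix α' α ℝ) (B : Matrix β' β ℝ) (x : α → ℝ) (y : β → ℝ) :
    (A ⊗ₖ B) *ᵥ QQRkv x y = QQRkv (A *ᵥ x) (B *ᵥ y) := by
  funext q
  simp only [QQRkv, Matrix.mulVec, dotProduct, kroneckerMap_apply,
    Fintype.sum_prod_type, Finset.sum_mul_sum]
  exact Finset.sum_congr rfl fun i _ => Finset.sum_congr rfl fun j _ => by ring

lemma QQRmulVec_dot {α β : Type*} [Fintype α] [Fintype β]
    (M : Matrix α β ℝ) (v : β → ℝ) (w : α → ℝ) :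
    (M *ᵥ v) ⬝ᵥ w = v ⬝ᵥ (Mᵀ *ᵥ w) := by
  rw [Matrix.mulVec_transpose, dotProduct_comm, Matrix.dotProduct_mulVec,
    dotProduct_comm]

lemma QQRdot_kv3 {n : ℕ} (w : Fin n × Fin n × Fin n → ℝ) (a b c : Fin n → ℝ) :
    w ⬝ᵥ QQRkv a (QQRkv b c) = QQRtri3 w a b c := by
  simp only [dotProduct, QQRkv, QQRtri3]
  exact Finset.sum_congr rfl fun q _ => by ring

lemma QQRvecCM_dot {n : ℕ} (V : Matrix (Fin n) (Fin n) ℝ) (y z : Fin n → ℝ) :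
    vecCM V ⬝ᵥ kron2 y z = z ⬝ᵥ V *ᵥ y := by
  simp only [vecCM, kron2, dotProduct, Matrix.mulVec, Fintype.sum_prod_type,
    Finset.mul_sum]
  rw [Finset.sum_comm]
  exact Finset.sum_congr rfl fun j _ => Finset.sum_congr rfl fun i _ => by ring

lemma QQRkron3_eq {n : ℕ} (x : Fin n → ℝ) : kron3 x = QQRkv x (QQRkv x x) := by
  funext q; simp [kron3, QQRkv, mul_assoc]

lemma QQRkron2_eq {n : ℕ} (x y : Fin n → ℝ) : kron2 x y = QQRkv x y := rfl

lemma QQRL3_dot {n : ℕ} (X : Matrix (Fin n) (Fin n) ℝ) (w : Fin n × Fin n × Fin n → ℝ)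
    (x : Fin n → ℝ) :
    (L3 Xᵀ *ᵥ w) ⬝ᵥ kron3 x
      = QQRtri3 w (X *ᵥ x) x x + QQRtri3 w x (X *ᵥ x) x + QQRtri3 w x x (X *ᵥ x) := by
  rw [QQRmulVec_dot, QQRkron3_eq]
  have ht : (L3 Xᵀ)ᵀ = X ⊗ₖ (1 : Matrix (Fin n × Fin n) (Fin n × Fin n) ℝ)
      + (1 : Matrix (Fin n) (Fin n) ℝ) ⊗ₖ (X ⊗ₖ (1 : Matrix (Fin n) (Fin n) ℝ))
      + (1 : Matrix (Fin n) (Fin n) ℝ) ⊗ₖ ((1 : Matrix (Fin n) (Fin n) ℝ) ⊗ₖ X) := by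
    simp [L3, Matrix.transpose_add, ← Matrix.kroneckerMap_transpose, Matrix.transpose_one]
  rw [ht]
  simp only [Matrix.add_mulVec, QQRkv_mulVec, Matrix.one_mulVec, dotProduct_add]
  rw [QQRdot_kv3, QQRdot_kv3, QQRdot_kv3]

lemma QQRL2N_dot {n : ℕ} (N : Matrix (Fin n) (Fin n × Fin n) ℝ)
    (V : Matrix (Fin n) (Fin n) ℝ) (x : Fin n → ℝ) :
    (L2N N *ᵥ vecCM V) ⬝ᵥ kron3 x
      = x ⬝ᵥ V *ᵥ (N *ᵥ kron2 x x) + (N *ᵥ kron2 x x) ⬝ᵥ V *ᵥ x := by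
  rw [QQRmulVec_dot]
  have ht : (L2N N)ᵀ = (Matrix.reindex (Equiv.refl (Fin n × Fin n))
        (Equiv.prodAssoc (Fin n) (Fin n) (Fin n)))
        (N ⊗ₖ (1 : Matrix (Fin n) (Fin n) ℝ))
      + (1 : Matrix (Fin n) (Fin n) ℝ) ⊗ₖ N := by
    simp [L2N, Matrix.transpose_add, Matrix.transpose_reindex,
      ← Matrix.kroneckerMap_transpose, Matrix.transpose_one]
  rw [ht, Matrix.add_mulVec, dotProduct_add]
  have h1 : (Matrix.reindex (Equiv.refl (Fin n × Fin n))
        (Equiv.prodAssoc (Fin n) (Fin n) (Fin n)))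
        (N ⊗ₖ (1 : Matrix (Fin n) (Fin n) ℝ)) *ᵥ kron3 x
      = QQRkv (N *ᵥ kron2 x x) x := by
    rw [Matrix.reindex_apply, Matrix.submatrix_mulVec_equiv]
    have h2 : kron3 x ∘ ⇑(Equiv.prodAssoc (Fin n) (Fin n) (Fin n)).symm.symm
        = QQRkv (QQRkv x x) x := by
      funext p
      simp [kron3, QQRkv, Equiv.prodAssoc]
    rw [h2, QQRkv_mulVec, Matrix.one_mulVec]
    rfl
  have h3 : (1 : Matrix (Fin n) (Fin n) ℝ) ⊗ₖ N *ᵥ kron3 x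
      = QQRkv x (N *ᵥ kron2 x x) := by
    rw [QQRkron3_eq, QQRkv_mulVec, Matrix.one_mulVec, QQRkron2_eq]
  rw [h1, h3, ← QQRkron2_eq, ← QQRkron2_eq, QQRvecCM_dot, QQRvecCM_dot]

open ContinuousLinearMap in
lemma QQRfderiv_apply {n : ℕ} (V2 : Matrix (Fin n) (Fin n) ℝ)
    (w : Fin n × Fin n × Fin n → ℝ) (x h : Fin n → ℝ) :
    fderiv ℝ (fun y : Fin n → ℝ => vecCM V2 ⬝ᵥ kron2 y y + w ⬝ᵥ kron3 y) x h
    = (∑ q : Fin n × Fin n, vecCM V2 q * (h q.1 * x q.2 + x q.1 * h q.2))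
      + ∑ q : Fin n × Fin n × Fin n,
          w q * ((h q.1 * x q.2.1 + x q.1 * h q.2.1) * x q.2.2
            + x q.1 * x q.2.1 * h q.2.2) := by
  have H : HasFDerivAt (fun y : Fin n → ℝ => vecCM V2 ⬝ᵥ kron2 y y + w ⬝ᵥ kron3 y)
      ((∑ q : Fin n × Fin n, vecCM V2 q •
          (x q.1 • proj (R := ℝ) (φ := fun _ : Fin n => ℝ) q.2 + x q.2 • proj q.1))
        + ∑ q : Fin n × Fin n × Fin n, w q •
          ((x q.1 * x q.2.1) • proj (R := ℝ) (φ := fun _ : Fin n => ℝ) q.2.2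
            + x q.2.2 • (x q.1 • proj q.2.1 + x q.2.1 • proj q.1))) x := by
    apply HasFDerivAt.add
    · apply HasFDerivAt.fun_sum
      intro q _
      exact ((hasFDerivAt_apply q.1 x).mul (hasFDerivAt_apply q.2 x)).const_mul _
    · apply HasFDerivAt.fun_sum
      intro q _
      exact (((hasFDerivAt_apply q.1 x).mul (hasFDerivAt_apply q.2.1 x)).mul
        (hasFDerivAt_apply q.2.2 x)).const_mul _
  rw [H.fderiv]
  simp only [ContinuousLinearMap.add_apply, ContinuousLinearMap.sum_apply,
    ContinuousLinearMap.smul_apply, ContinuousLinearMap.proj_apply, smul_eq_mul]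
  congr 1
  · exact Finset.sum_congr rfl fun q _ => by ring
  · exact Finset.sum_congr rfl fun q _ => by ring

lemma QQRS2_eq {n : ℕ} (V2 : Matrix (Fin n) (Fin n) ℝ) (x F : Fin n → ℝ) :
    (∑ q : Fin n × Fin n, vecCM V2 q * (F q.1 * x q.2 + x q.1 * F q.2))
      = x ⬝ᵥ V2 *ᵥ F + F ⬝ᵥ V2 *ᵥ x := by
  have h1 : (∑ q : Fin n × Fin n, vecCM V2 q * (F q.1 * x q.2 + x q.1 * F q.2))
      = vecCM V2 ⬝ᵥ kron2 F x + vecCM V2 ⬝ᵥ kron2 x F := by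
    simp only [dotProduct, kron2, ← Finset.sum_add_distrib]
    exact Finset.sum_congr rfl fun q _ => by ring
  rw [h1, QQRvecCM_dot, QQRvecCM_dot]

lemma QQRS3_eq {n : ℕ} (w : Fin n × Fin n × Fin n → ℝ) (x F : Fin n → ℝ) :
    (∑ q : Fin n × Fin n × Fin n,
        w q * ((F q.1 * x q.2.1 + x q.1 * F q.2.1) * x q.2.2
          + x q.1 * x q.2.1 * F q.2.2))
      = QQRtri3 w F x x + QQRtri3 w x F x + QQRtri3 w x x F := by
  simp only [QQRtri3, ← Finset.sum_add_distrib]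
  exact Finset.sum_congr rfl fun q _ => by ring

lemma QQRtri3_add1 {n : ℕ} (w : Fin n × Fin n × Fin n → ℝ) (a a' b c : Fin n → ℝ) :
    QQRtri3 w (a + a') b c = QQRtri3 w a b c + QQRtri3 w a' b c := by
  simp only [QQRtri3, Pi.add_apply, ← Finset.sum_add_distrib]
  exact Finset.sum_congr rfl fun q _ => by ring

lemma QQRtri3_add2 {n : ℕ} (w : Fin n × Fin n × Fin n → ℝ) (a b b' c : Fin n → ℝ) :
    QQRtri3 w a (b + b') c = QQRtri3 w a b c + QQRtri3 w a b' c := by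
  simp only [QQRtri3, Pi.add_apply, ← Finset.sum_add_distrib]
  exact Finset.sum_congr rfl fun q _ => by ring

lemma QQRtri3_add3 {n : ℕ} (w : Fin n × Fin n × Fin n → ℝ) (a b c c' : Fin n → ℝ) :
    QQRtri3 w a b (c + c') = QQRtri3 w a b c + QQRtri3 w a b c' := by
  simp only [QQRtri3, Pi.add_apply, ← Finset.sum_add_distrib]
  exact Finset.sum_congr rfl fun q _ => by ring

lemma QQRabs_dot_le {ι : Type*} [Fintype ι] (v w : ι → ℝ) (c : ι → ℝ)
    (h : ∀ i, |w i| ≤ c i) : |v ⬝ᵥ w| ≤ ∑ i, |v i| * c i := by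
  refine (Finset.abs_sum_le_sum_abs _ _).trans (Finset.sum_le_sum fun i _ => ?_)
  rw [abs_mul]
  exact mul_le_mul_of_nonneg_left (h i) (abs_nonneg _)

lemma QQRabs_mulVec_le {ι κ : Type*} [Fintype ι] [Fintype κ] (M : Matrix ι κ ℝ)
    (w : κ → ℝ) (t : ℝ) (ht : 0 ≤ t) (h : ∀ p, |w p| ≤ t) (i : ι) :
    |(M *ᵥ w) i| ≤ (∑ i' , ∑ p, |M i' p|) * t := by
  calc |(M *ᵥ w) i| ≤ ∑ p, |M i p| * t := QQRabs_dot_le (M i) w _ fun p => h p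
  _ = (∑ p, |M i p|) * t := (Finset.sum_mul _ _ _).symm
  _ ≤ (∑ i', ∑ p, |M i' p|) * t := by
      refine mul_le_mul_of_nonneg_right ?_ ht
      exact Finset.single_le_sum (f := fun i' => ∑ p, |M i' p|)
        (fun _ _ => Finset.sum_nonneg fun _ _ => abs_nonneg _) (Finset.mem_univ i)

lemma QQRtri3_bound {n : ℕ} (w : Fin n × Fin n × Fin n → ℝ) (a b c : Fin n → ℝ)
    (sa sb sc : ℝ) (h0a : 0 ≤ sa) (h0b : 0 ≤ sb) (h0c : 0 ≤ sc)
    (ha : ∀ i, |a i| ≤ sa) (hb : ∀ i, |b i| ≤ sb) (hc : ∀ i, |c i| ≤ sc) :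
    |QQRtri3 w a b c| ≤ (∑ q, |w q|) * (sa * sb * sc) := by
  rw [QQRtri3, Finset.sum_mul]
  refine (Finset.abs_sum_le_sum_abs _ _).trans (Finset.sum_le_sum fun q _ => ?_)
  rw [abs_mul]
  refine mul_le_mul_of_nonneg_left ?_ (abs_nonneg _)
  calc |a q.1 * b q.2.1 * c q.2.2| = |a q.1| * |b q.2.1| * |c q.2.2| := by
        rw [abs_mul, abs_mul]
  _ ≤ sa * sb * sc := by
      exact mul_le_mul (mul_le_mul (ha _) (hb _) (abs_nonneg _) h0a) (hc _)
        (abs_nonneg _) (by positivity)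

lemma QQRdot_bound {ι : Type*} [Fintype ι] (u z : ι → ℝ) (su sz : ℝ)
    (h0z : 0 ≤ sz) (hu : ∀ i, |u i| ≤ su) (hz : ∀ i, |z i| ≤ sz) :
    |u ⬝ᵥ z| ≤ (Fintype.card ι : ℝ) * (su * sz) := by
  calc |u ⬝ᵥ z| ≤ ∑ i, |u i| * sz := QQRabs_dot_le u z _ hz
  _ ≤ ∑ _i : ι, su * sz := Finset.sum_le_sum fun i _ =>
      mul_le_mul_of_nonneg_right (hu i) h0z
  _ = (Fintype.card ι : ℝ) * (su * sz) := by
      rw [Finset.sum_const, Finset.card_univ, nsmul_eq_mul]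

/-- For the quadratic–quadratic regulator: if `V2` solves the Riccati equation,
`k1 = −R⁻¹BᵀV2`, and `v3` solves `L₃((A+Bk1)ᵀ) v3 = −(Nᵀ⊗I + I⊗Nᵀ) v2`, then for every
quadratic gain `k2` the feedback `u(x) = k1 x + k2 (x⊗x)` makes the HJB residual for the
cubic value function `v(x) = v2ᵀ(x⊗x) + v3ᵀ(x⊗x⊗x)` vanish to third order at the origin:
`ρ(x)/‖x‖³ → 0` as `x → 0`. -/
theorem qqr_cubic_hjb_residual
    (n m : ℕ)
    (A : Matrix (Fin n) (Fin n) ℝ) (B : Matrix (Fin n) (Fin m) ℝ)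
    (N : Matrix (Fin n) (Fin n × Fin n) ℝ)
    (Q : Matrix (Fin n) (Fin n) ℝ) (hQ : Q.IsSymm)
    (R : Matrix (Fin m) (Fin m) ℝ) (hR : R.PosDef)
    (V2 : Matrix (Fin n) (Fin n) ℝ) (hV2 : V2.IsSymm)
    (hRic : Aᵀ * V2 + V2 * A - V2 * B * R⁻¹ * Bᵀ * V2 + Q = 0)
    (k1 : Matrix (Fin m) (Fin n) ℝ) (hk1 : k1 = -(R⁻¹ * Bᵀ * V2))
    (v3 : Fin n × Fin n × Fin n → ℝ)
    (hv3 : (L3 (A + B * k1)ᵀ) *ᵥ v3 = -((L2N N) *ᵥ vecCM V2))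
    (v : (Fin n → ℝ) → ℝ)
    (hv : ∀ x, v x = vecCM V2 ⬝ᵥ kron2 x x + v3 ⬝ᵥ kron3 x) :
    ∀ k2 : Matrix (Fin m) (Fin n × Fin n) ℝ,
      ∀ u : (Fin n → ℝ) → Fin m → ℝ,
        (∀ x, u x = k1 *ᵥ x + k2 *ᵥ kron2 x x) →
        Tendsto
          (fun x : Fin n → ℝ =>
            (fderiv ℝ v x (A *ᵥ x + B *ᵥ u x + N *ᵥ kron2 x x)
              + x ⬝ᵥ Q *ᵥ x + u x ⬝ᵥ R *ᵥ u x) / ‖x‖ ^ 3)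
          (𝓝[≠] (0 : Fin n → ℝ)) (𝓝 0) := by
  intro k2 u hu
  have hvf : v = fun y => vecCM V2 ⬝ᵥ kron2 y y + v3 ⬝ᵥ kron3 y := funext hv
  -- basic matrix facts
  have hdet : IsUnit R.det := hR.det_pos.ne'.isUnit
  have hRiR : R⁻¹ * R = 1 := Matrix.nonsing_inv_mul R hdet
  have hRRi : R * R⁻¹ = 1 := Matrix.mul_nonsing_inv R hdet
  have hRT : Rᵀ = R := by
    ext i j
    simpa using congrFun (congrFun hR.1 i) j
  have hRiT : R⁻¹ᵀ = R⁻¹ := by rw [Matrix.transpose_nonsing_inv, hRT]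
  have hV2T : V2ᵀ = V2 := hV2
  have hk1T : k1ᵀ = -(V2 * (B * R⁻¹)) := by
    rw [hk1]
    simp [Matrix.transpose_mul, hRiT, hV2T, Matrix.mul_assoc]
  have hk1TR : k1ᵀ * R = -(V2 * B) := by
    rw [hk1T, Matrix.neg_mul, Matrix.mul_assoc, Matrix.mul_assoc, hRiR, Matrix.mul_one]
  have hRk1 : R * k1 = -(Bᵀ * V2) := by
    rw [hk1, Matrix.mul_neg, ← Matrix.mul_assoc, ← Matrix.mul_assoc, hRRi, Matrix.one_mul]
  -- the degree-two coefficient matrix vanishes (Riccati)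
  have Mzero : V2 * (A + B * k1) + (A + B * k1)ᵀ * V2 + Q + k1ᵀ * (R * k1) = 0 := by
    have expand : V2 * (A + B * k1) + (A + B * k1)ᵀ * V2 + Q + k1ᵀ * (R * k1)
        = Aᵀ * V2 + V2 * A - V2 * B * R⁻¹ * Bᵀ * V2 + Q := by
      rw [hRk1]
      simp only [Matrix.transpose_add, Matrix.transpose_mul, Matrix.transpose_neg,
        Matrix.transpose_transpose, hk1, hRiT, hV2T, Matrix.mul_neg, Matrix.neg_mul,
        Matrix.mul_add, Matrix.add_mul, neg_neg, Matrix.mul_assoc, sub_eq_add_neg]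
      abel
    rw [expand, hRic]
  have key : ∀ x : Fin n → ℝ,
      fderiv ℝ v x (A *ᵥ x + B *ᵥ u x + N *ᵥ kron2 x x) + x ⬝ᵥ Q *ᵥ x + u x ⬝ᵥ R *ᵥ u x
        = QQRtri3 v3 ((B * k2 + N) *ᵥ kron2 x x) x x
          + QQRtri3 v3 x ((B * k2 + N) *ᵥ kron2 x x) x
          + QQRtri3 v3 x x ((B * k2 + N) *ᵥ kron2 x x)
          + (k2 *ᵥ kron2 x x) ⬝ᵥ R *ᵥ (k2 *ᵥ kron2 x x) := by
    intro x
    have hE0 : x ⬝ᵥ ((V2 * (A + B * k1) + (A + B * k1)ᵀ * V2 + Q + k1ᵀ * (R * k1)) *ᵥ x)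
        = 0 := by rw [Mzero]; simp
    have hE2 : QQRtri3 v3 ((A + B * k1) *ᵥ x) x x + QQRtri3 v3 x ((A + B * k1) *ᵥ x) x
        + QQRtri3 v3 x x ((A + B * k1) *ᵥ x)
        = -(x ⬝ᵥ V2 *ᵥ (N *ᵥ kron2 x x) + (N *ᵥ kron2 x x) ⬝ᵥ V2 *ᵥ x) := by
      rw [← QQRL3_dot, hv3, neg_dotProduct, QQRL2N_dot]
    have hA : k1ᵀ * (R * k2) = -(V2 * (B * k2)) := by
      rw [← Matrix.mul_assoc, hk1TR, Matrix.neg_mul, Matrix.mul_assoc]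
    have hB : k2ᵀ * (R * k1) = -(k2ᵀ * (Bᵀ * V2)) := by
      rw [hRk1, Matrix.mul_neg]
    have hE3 : (k1 *ᵥ x) ⬝ᵥ (R *ᵥ (k2 *ᵥ kron2 x x))
        + x ⬝ᵥ (V2 *ᵥ (B *ᵥ (k2 *ᵥ kron2 x x))) = 0 := by
      simp only [QQRmulVec_dot, Matrix.mulVec_mulVec, ← Matrix.mul_assoc]
      simp only [Matrix.mul_assoc, hA, Matrix.neg_mulVec, dotProduct_neg]
      exact neg_add_cancel _
    have hE4 : (k2 *ᵥ kron2 x x) ⬝ᵥ (R *ᵥ (k1 *ᵥ x))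
        + (B *ᵥ (k2 *ᵥ kron2 x x)) ⬝ᵥ (V2 *ᵥ x) = 0 := by
      simp only [QQRmulVec_dot, Matrix.mulVec_mulVec, ← Matrix.mul_assoc]
      simp only [Matrix.transpose_mul, Matrix.mul_assoc, hB, Matrix.neg_mulVec,
        dotProduct_neg]
      exact neg_add_cancel _
    rw [hvf, QQRfderiv_apply, QQRS2_eq, QQRS3_eq, hu]
    simp only [Matrix.transpose_add, Matrix.transpose_mul, Matrix.add_mulVec,
      Matrix.mulVec_add, ← Matrix.mulVec_mulVec, dotProduct_add,
      add_dotProduct, QQRmulVec_dot, QQRtri3_add1, QQRtri3_add2,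
      QQRtri3_add3] at hE0 hE2 hE3 hE4 ⊢
    linear_combination hE0 + hE2 + hE3 + hE4
  -- the remainder is quartic: bound it
  set M' : Matrix (Fin n) (Fin n × Fin n) ℝ := B * k2 + N with hM'
  set CM : ℝ := ∑ i, ∑ p, |M' i p| with hCM
  set Cv : ℝ := ∑ q, |v3 q| with hCv
  set Ck : ℝ := ∑ i, ∑ p, |k2 i p| with hCk
  set CR : ℝ := ∑ i, ∑ j, |R i j| with hCR
  have hCM0 : 0 ≤ CM := Finset.sum_nonneg fun _ _ =>
    Finset.sum_nonneg fun _ _ => abs_nonneg _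
  have hCv0 : 0 ≤ Cv := Finset.sum_nonneg fun _ _ => abs_nonneg _
  have hCk0 : 0 ≤ Ck := Finset.sum_nonneg fun _ _ =>
    Finset.sum_nonneg fun _ _ => abs_nonneg _
  have hCR0 : 0 ≤ CR := Finset.sum_nonneg fun _ _ =>
    Finset.sum_nonneg fun _ _ => abs_nonneg _
  set C : ℝ := 3 * (Cv * CM) + (Fintype.card (Fin m) : ℝ) * (Ck * (CR * Ck)) with hC
  have hbound : ∀ x : Fin n → ℝ,
      |QQRtri3 v3 (M' *ᵥ kron2 x x) x x + QQRtri3 v3 x (M' *ᵥ kron2 x x) x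
        + QQRtri3 v3 x x (M' *ᵥ kron2 x x)
        + (k2 *ᵥ kron2 x x) ⬝ᵥ R *ᵥ (k2 *ᵥ kron2 x x)| ≤ C * ‖x‖ ^ 4 := by
    intro x
    set t : ℝ := ‖x‖ with hts
    have ht0 : 0 ≤ t := norm_nonneg x
    have hxt : ∀ i, |x i| ≤ t := fun i => by
      simpa [Real.norm_eq_abs] using norm_le_pi_norm x i
    have hq : ∀ p : Fin n × Fin n, |kron2 x x p| ≤ t * t := fun p => by
      rw [kron2, abs_mul]
      exact mul_le_mul (hxt _) (hxt _) (abs_nonneg _) ht0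
    have htt : (0:ℝ) ≤ t * t := mul_nonneg ht0 ht0
    have hMq : ∀ i, |(M' *ᵥ kron2 x x) i| ≤ CM * (t * t) :=
      QQRabs_mulVec_le M' _ _ htt hq
    have hkq : ∀ i, |(k2 *ᵥ kron2 x x) i| ≤ Ck * (t * t) :=
      QQRabs_mulVec_le k2 _ _ htt hq
    have hRkq : ∀ i, |(R *ᵥ (k2 *ᵥ kron2 x x)) i| ≤ CR * (Ck * (t * t)) :=
      QQRabs_mulVec_le R _ _ (mul_nonneg hCk0 htt) hkq
    have hCMtt : (0:ℝ) ≤ CM * (t * t) := mul_nonneg hCM0 htt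
    have b1 : |QQRtri3 v3 (M' *ᵥ kron2 x x) x x| ≤ Cv * (CM * (t * t) * t * t) :=
      QQRtri3_bound v3 (M' *ᵥ kron2 x x) x x (CM * (t * t)) t t hCMtt ht0 ht0 hMq hxt hxt
    have b2 : |QQRtri3 v3 x (M' *ᵥ kron2 x x) x| ≤ Cv * (t * (CM * (t * t)) * t) :=
      QQRtri3_bound v3 x (M' *ᵥ kron2 x x) x t (CM * (t * t)) t ht0 hCMtt ht0 hxt hMq hxt
    have b3 : |QQRtri3 v3 x x (M' *ᵥ kron2 x x)| ≤ Cv * (t * t * (CM * (t * t))) :=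
      QQRtri3_bound v3 x x (M' *ᵥ kron2 x x) t t (CM * (t * t)) ht0 ht0 hCMtt hxt hxt hMq
    have b4 : |(k2 *ᵥ kron2 x x) ⬝ᵥ R *ᵥ (k2 *ᵥ kron2 x x)|
        ≤ (Fintype.card (Fin m) : ℝ) * ((Ck * (t * t)) * (CR * (Ck * (t * t)))) :=
      QQRdot_bound _ _ _ _ (mul_nonneg hCR0 (mul_nonneg hCk0 htt)) hkq hRkq
    calc |QQRtri3 v3 (M' *ᵥ kron2 x x) x x + QQRtri3 v3 x (M' *ᵥ kron2 x x) x
        + QQRtri3 v3 x x (M' *ᵥ kron2 x x)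
        + (k2 *ᵥ kron2 x x) ⬝ᵥ R *ᵥ (k2 *ᵥ kron2 x x)|
        ≤ |QQRtri3 v3 (M' *ᵥ kron2 x x) x x| + |QQRtri3 v3 x (M' *ᵥ kron2 x x) x|
          + |QQRtri3 v3 x x (M' *ᵥ kron2 x x)|
          + |(k2 *ᵥ kron2 x x) ⬝ᵥ R *ᵥ (k2 *ᵥ kron2 x x)| :=
        (abs_add_le _ _).trans (add_le_add_left ((abs_add_le _ _).trans
          (add_le_add_left (abs_add_le _ _) _)) _)
    _ ≤ Cv * (CM * (t * t) * t * t) + Cv * (t * (CM * (t * t)) * t)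
          + Cv * (t * t * (CM * (t * t)))
          + (Fintype.card (Fin m) : ℝ) * ((Ck * (t * t)) * (CR * (Ck * (t * t)))) := by
        exact add_le_add (add_le_add (add_le_add b1 b2) b3) b4
    _ = C * t ^ 4 := by rw [hC]; ring
  -- conclude by squeezing
  refine squeeze_zero_norm' (a := fun x : Fin n → ℝ => C * ‖x‖) ?_ ?_
  · filter_upwards [self_mem_nhdsWithin] with x hx
    have hx0 : x ≠ 0 := hx
    have hxn : (0 : ℝ) < ‖x‖ := norm_pos_iff.mpr hx0
    have hp3 : (0 : ℝ) < ‖x‖ ^ 3 := by positivity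
    rw [key x, Real.norm_eq_abs, abs_div, abs_of_pos hp3, div_le_iff₀ hp3]
    calc |QQRtri3 v3 (M' *ᵥ kron2 x x) x x + QQRtri3 v3 x (M' *ᵥ kron2 x x) x
        + QQRtri3 v3 x x (M' *ᵥ kron2 x x)
        + (k2 *ᵥ kron2 x x) ⬝ᵥ R *ᵥ (k2 *ᵥ kron2 x x)| ≤ C * ‖x‖ ^ 4 := hbound x
    _ = C * ‖x‖ * ‖x‖ ^ 3 := by ring
  · have hcont : Tendsto (fun x : Fin n → ℝ => C * ‖x‖) (𝓝 0) (𝓝 (C * ‖(0 : Fin n → ℝ)‖)) :=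
      (continuous_const.mul continuous_norm).tendsto 0
    have : Tendsto (fun x : Fin n → ℝ => C * ‖x‖) (𝓝 0) (𝓝 0) := by
      simpa using hcont
    exact this.mono_left nhdsWithin_le_nhds
end
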